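/- arXiv:math/0407026 — 2 statements merged into one kernel-verified Lean document; each statement's English description precedes it below -/
import Mathlib

section
/- Under the hypotheses of the local polynomial approximation lemma (pointwise solvability of F at every point of Ω and continuity of f on Ω), for every ε > 0 there exist a closed nowhere dense subset Γ_ε ⊂ Ω and a function U_ε ∈ C^∞(Ω \ Γ_ε) such that f − ε ≤ T(x,D)U_ε ≤ f on Ω \ Γ_ε. Moreover, Γ_ε can be chosen to have Lebesgue measure zero. -/
noncomputable def pd {n : ℕ} (i : Fin n) (u : (Fin n → ℝ) → ℝ) :
    (Fin n → ℝ) → ℝ :=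
  fun x => fderiv ℝ u x (Pi.single i 1)

noncomputable def multiDeriv {n : ℕ} (p : Fin n → ℕ) (u : (Fin n → ℝ) → ℝ) :
    (Fin n → ℝ) → ℝ :=
  (List.finRange n).foldr (fun i v => (pd i)^[p i] v) u

noncomputable def PDOp {n : ℕ} (F : (Fin n → ℝ) → ((Fin n → ℕ) → ℝ) → ℝ)
    (u : (Fin n → ℝ) → ℝ) : (Fin n → ℝ) → ℝ :=
  fun x => F x (fun p => multiDeriv p u x)

/-- `Γ` is a closed, nowhere dense subset of the open set `Ω`. -/
def ClosedNwdIn {n : ℕ} (Γ Ω : Set (Fin n → ℝ)) : Prop :=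
  Γ ⊆ Ω ∧ closure Γ ∩ Ω ⊆ Γ ∧ interior (closure Γ) = ∅

lemma eqOn_pd {n : ℕ} {i : Fin n} {u v : (Fin n → ℝ) → ℝ} {s : Set (Fin n → ℝ)}
    (hs : IsOpen s) (h : Set.EqOn u v s) : Set.EqOn (pd i u) (pd i v) s := fun x hx => by
  unfold pd
  rw [Filter.EventuallyEq.fderiv_eq (Filter.eventuallyEq_of_mem (hs.mem_nhds hx) h)]

lemma eqOn_pd_iter {n : ℕ} {i : Fin n} (k : ℕ) {u v : (Fin n → ℝ) → ℝ}
    {s : Set (Fin n → ℝ)} (hs : IsOpen s) (h : Set.EqOn u v s) :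
    Set.EqOn ((pd i)^[k] u) ((pd i)^[k] v) s := by
  induction k generalizing u v with
  | zero => exact h
  | succ k ih =>
    simpa [Function.iterate_succ_apply] using ih (eqOn_pd hs h)

lemma eqOn_multiDeriv {n : ℕ} (p : Fin n → ℕ) {u v : (Fin n → ℝ) → ℝ}
    {s : Set (Fin n → ℝ)} (hs : IsOpen s) (h : Set.EqOn u v s) :
    Set.EqOn (multiDeriv p u) (multiDeriv p v) s := by
  unfold multiDeriv
  generalize List.finRange n = l
  induction l generalizing u v with
  | nil => exact h
  | cons i l ih => exact eqOn_pd_iter _ hs (ih h)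

lemma contDiff_mvpoly {n : ℕ} (P : MvPolynomial (Fin n) ℝ) :
    ContDiff ℝ (⊤ : ℕ∞) (fun x : Fin n → ℝ => MvPolynomial.eval x P) := by
  induction P using MvPolynomial.induction_on with
  | C a => simpa using contDiff_const (c := a)
  | add p q hp hq => simpa using hp.add hq
  | mul_X p i hp => simpa using hp.mul (contDiff_apply ℝ ℝ i)

/-- Proposition 5.1, global approximation off a closed nowhere dense
set of Lebesgue measure zero. -/
theorem statement_1 (n m : ℕ) (Ω : Set (Fin n → ℝ)) (hΩ : IsOpen Ω)
    (F : (Fin n → ℝ) → ((Fin n → ℕ) → ℝ) → ℝ)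
    (hF : Continuous (Function.uncurry F))
    (hFm : ∀ x ξ η, (∀ p : Fin n → ℕ, (∑ i, p i) ≤ m → ξ p = η p) → F x ξ = F x η)
    (f : (Fin n → ℝ) → ℝ) (hf : ContinuousOn f Ω)
    (hsolv : ∀ x ∈ Ω, ∃ ξ : (Fin n → ℕ) → ℝ, F x ξ = f x)
    (hlocal : ∀ x₀ ∈ Ω, ∀ ε : ℝ, 0 < ε →
      ∃ δ : ℝ, 0 < δ ∧ ∃ P : MvPolynomial (Fin n) ℝ,
        ∀ x ∈ Ω, ‖x - x₀‖ ≤ δ →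
          f x - ε ≤ PDOp F (fun y => MvPolynomial.eval y P) x ∧
          PDOp F (fun y => MvPolynomial.eval y P) x ≤ f x) :
    ∀ ε : ℝ, 0 < ε →
      ∃ Γ : Set (Fin n → ℝ), ClosedNwdIn Γ Ω ∧ MeasureTheory.volume Γ = 0 ∧
        ∃ U : (Fin n → ℝ) → ℝ, ContDiffOn ℝ (⊤ : ℕ∞) U (Ω \ Γ) ∧
          ∀ x ∈ Ω \ Γ, f x - ε ≤ PDOp F U x ∧ PDOp F U x ≤ f x := by
  classical
  intro ε hε
  rcases Set.eq_empty_or_nonempty Ω with hΩe | ⟨x₀, hx₀⟩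
  · refine ⟨∅, ⟨Set.empty_subset _, by simp, by simp⟩, by simp, 0, ?_, ?_⟩
    · simp only [hΩe, Set.empty_diff]
      exact fun x hx => absurd hx (Set.notMem_empty x)
    · intro x hx
      rw [hΩe] at hx
      simp at hx
  -- For each point of Ω choose a radius and polynomial from the local lemma.
  have key : ∀ x₀ : Ω, ∃ r : ℝ, 0 < r ∧ Metric.ball (x₀ : Fin n → ℝ) r ⊆ Ω ∧
      ∃ P : MvPolynomial (Fin n) ℝ, ∀ x ∈ Metric.ball (x₀ : Fin n → ℝ) r,
        f x - ε ≤ PDOp F (fun y => MvPolynomial.eval y P) x ∧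
        PDOp F (fun y => MvPolynomial.eval y P) x ≤ f x := by
    rintro ⟨x₁, hx₁⟩
    obtain ⟨δ, hδ, P, hpol⟩ := hlocal x₁ hx₁ ε hε
    obtain ⟨s, hs, hsub⟩ := Metric.isOpen_iff.mp hΩ x₁ hx₁
    refine ⟨min δ s, lt_min hδ hs, ?_, P, ?_⟩
    · exact (Metric.ball_subset_ball (min_le_right _ _)).trans hsub
    · intro x hx
      have hxΩ : x ∈ Ω := hsub (Metric.ball_subset_ball (min_le_right _ _) hx)
      have hnorm : ‖x - x₁‖ ≤ δ := by
        have hd := Metric.mem_ball.mp hx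
        rw [← dist_eq_norm]
        exact le_of_lt (lt_of_lt_of_le hd (min_le_left _ _))
      exact hpol x hxΩ hnorm
  choose r hr hsub P hP using key
  -- Countable subcover
  obtain ⟨t, htc, hteq⟩ := TopologicalSpace.isOpen_iUnion_countable
    (fun i : Ω => Metric.ball (i : Fin n → ℝ) (r i)) (fun _ => Metric.isOpen_ball)
  have htne : t.Nonempty := by
    have hx : (x₀ : Fin n → ℝ) ∈ ⋃ i : Ω, Metric.ball (i : Fin n → ℝ) (r i) :=
      Set.mem_iUnion.mpr ⟨⟨x₀, hx₀⟩, Metric.mem_ball_self (hr _)⟩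
    rw [← hteq] at hx
    obtain ⟨i, hi, -⟩ := Set.mem_iUnion₂.mp hx
    exact ⟨i, hi⟩
  obtain ⟨g, hg⟩ := Set.Countable.exists_eq_range htc htne
  set B : ℕ → Set (Fin n → ℝ) := fun k => Metric.ball ((g k : Fin n → ℝ)) (r (g k)) with hB
  have hcover : Ω ⊆ ⋃ k, B k := by
    intro x hx
    have hx' : x ∈ ⋃ i : Ω, Metric.ball (i : Fin n → ℝ) (r i) :=
      Set.mem_iUnion.mpr ⟨⟨x, hx⟩, Metric.mem_ball_self (hr _)⟩
    rw [← hteq] at hx'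
    obtain ⟨i, hi, hxi⟩ := Set.mem_iUnion₂.mp hx'
    rw [hg] at hi
    obtain ⟨k, rfl⟩ := hi
    exact Set.mem_iUnion.mpr ⟨k, hxi⟩
  set V : ℕ → Set (Fin n → ℝ) :=
    fun k => B k \ closure (⋃ j ∈ Finset.range k, B j) with hV
  have hVopen : ∀ k, IsOpen (V k) := fun k => Metric.isOpen_ball.sdiff isClosed_closure
  have hVsubB : ∀ k, V k ⊆ B k := fun k => Set.diff_subset
  have hVdisj : ∀ j k, j < k → ∀ x, x ∈ V j → x ∈ V k → False := by
    intro j k hjk x hxj hxk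
    exact hxk.2 (subset_closure
      (Set.mem_biUnion (Finset.mem_range.mpr hjk) (hVsubB j hxj)))
  set Γ : Set (Fin n → ℝ) := Ω \ ⋃ k, V k with hΓ
  have hΓsub : Γ ⊆ Ω := Set.diff_subset
  have hΓcl : closure Γ ∩ Ω ⊆ Γ := by
    rintro x ⟨hxc, hxΩ⟩
    refine ⟨hxΩ, ?_⟩
    have hsubc : closure Γ ⊆ (⋃ k, V k)ᶜ :=
      closure_minimal (fun y hy => hy.2) (isOpen_iUnion hVopen).isClosed_compl
    exact hsubc hxc
  have hΓsph : Γ ⊆ ⋃ k, Metric.sphere ((g k : Fin n → ℝ)) (r (g k)) := by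
    rintro x ⟨hxΩ, hxV⟩
    have hxB : ∃ k, x ∈ B k := Set.mem_iUnion.mp (hcover hxΩ)
    set k := Nat.find hxB with hk
    have hkx : x ∈ B k := Nat.find_spec hxB
    have hVk : x ∉ V k := fun h => hxV (Set.mem_iUnion.mpr ⟨k, h⟩)
    have hcl : x ∈ closure (⋃ j ∈ Finset.range k, B j) := by
      by_contra h
      exact hVk ⟨hkx, h⟩
    have hclsub : closure (⋃ j ∈ Finset.range k, B j) ⊆
        ⋃ j ∈ Finset.range k, Metric.closedBall ((g j : Fin n → ℝ)) (r (g j)) := by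
      apply closure_minimal
      · exact Set.iUnion₂_mono fun j _ => Metric.ball_subset_closedBall
      · exact (Finset.range k).finite_toSet.isClosed_biUnion fun j _ => Metric.isClosed_closedBall
    obtain ⟨j, hj, hxj⟩ := Set.mem_iUnion₂.mp (hclsub hcl)
    have hxnB : x ∉ B j := Nat.find_min hxB (Finset.mem_range.mp hj)
    refine Set.mem_iUnion.mpr ⟨j, ?_⟩
    have h1 : dist x ((g j : Fin n → ℝ)) ≤ r (g j) := Metric.mem_closedBall.mp hxj
    have h2 : ¬ dist x ((g j : Fin n → ℝ)) < r (g j) := fun h => hxnB (Metric.mem_ball.mpr h)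
    exact Metric.mem_sphere.mpr (le_antisymm h1 (not_lt.mp h2))
  have hΓvol : MeasureTheory.volume Γ = 0 := by
    refine MeasureTheory.measure_mono_null hΓsph (MeasureTheory.measure_iUnion_null fun k => ?_)
    exact MeasureTheory.Measure.addHaar_sphere_of_ne_zero _ _ (ne_of_gt (hr (g k)))
  have hΓint : interior (closure Γ) = ∅ := by
    by_contra h
    obtain ⟨y, hy⟩ := Set.nonempty_iff_ne_empty.mpr h
    have hyc : y ∈ closure Γ := interior_subset hy
    obtain ⟨z, hz, hzΓ⟩ := mem_closure_iff.mp hyc _ isOpen_interior hy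
    have hzΩ : z ∈ Ω := hΓsub hzΓ
    have hWopen : IsOpen (interior (closure Γ) ∩ Ω) := isOpen_interior.inter hΩ
    have hWΓ : interior (closure Γ) ∩ Ω ⊆ Γ := fun w hw => hΓcl ⟨interior_subset hw.1, hw.2⟩
    have hpos := hWopen.measure_pos MeasureTheory.volume ⟨z, hz, hzΩ⟩
    exact absurd (MeasureTheory.measure_mono_null hWΓ hΓvol) (ne_of_gt hpos)
  -- The piecewise-polynomial function
  set U : (Fin n → ℝ) → ℝ := fun x =>
    if h : ∃ k, x ∈ V k then MvPolynomial.eval x (P (g (Nat.find h))) else 0 with hU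
  have hUeq : ∀ k, Set.EqOn U (fun y => MvPolynomial.eval y (P (g k))) (V k) := by
    intro k x hx
    have h : ∃ j, x ∈ V j := ⟨k, hx⟩
    have h1 : Nat.find h ≤ k := Nat.find_le hx
    have h2 : ¬ Nat.find h < k := fun hlt => hVdisj _ _ hlt x (Nat.find_spec h) hx
    have hfind : Nat.find h = k := le_antisymm h1 (not_lt.mp h2)
    simp only [hU]
    rw [dif_pos h, hfind]
  have hmemV : ∀ x ∈ Ω \ Γ, ∃ k, x ∈ V k := by
    intro x hx
    by_contra h
    exact hx.2 ⟨hx.1, fun hmem => h (Set.mem_iUnion.mp hmem)⟩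
  have hUsmooth : ContDiffOn ℝ (⊤ : ℕ∞) U (Ω \ Γ) := by
    intro x hx
    obtain ⟨k, hk⟩ := hmemV x hx
    refine ContDiffAt.contDiffWithinAt ?_
    have heq : U =ᶠ[nhds x] fun y => MvPolynomial.eval y (P (g k)) :=
      Filter.eventuallyEq_of_mem ((hVopen k).mem_nhds hk) (hUeq k)
    exact (contDiff_mvpoly (P (g k))).contDiffAt.congr_of_eventuallyEq heq
  have hPDOp : ∀ k, ∀ x ∈ V k,
      PDOp F U x = PDOp F (fun y => MvPolynomial.eval y (P (g k))) x := by
    intro k x hx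
    unfold PDOp
    congr 1
    funext p
    exact eqOn_multiDeriv p (hVopen k) (hUeq k) hx
  refine ⟨Γ, ⟨hΓsub, hΓcl, hΓint⟩, hΓvol, U, hUsmooth, ?_⟩
  intro x hx
  obtain ⟨k, hk⟩ := hmemV x hx
  rw [hPDOp k x hk]
  exact hP (g k) x (hVsubB k hk)
end

section
/- A Hausdorff continuous function u on an open set Ω ⊆ ℝⁿ is real-valued (i.e., u(x) is a degenerate interval) on a dense subset of Ω, and u is completely determined by its values on any such dense subset: if u and v are Hausdorff continuous on Ω and u(x) = v(x) for all x in a dense subset D of Ω on which both are point-valued, then u = v on Ω. -/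
open scoped Classical

/-- Lower Baire operator (relative to `Ω`):
`I(g)(x) = sup_{δ>0} inf { g(y) : y ∈ Ω, ‖y − x‖ < δ }`. -/
noncomputable def baireLower {n : ℕ} (Ω : Set (Fin n → ℝ))
    (g : (Fin n → ℝ) → EReal) (x : Fin n → ℝ) : EReal :=
  ⨆ δ : {d : ℝ // 0 < d}, ⨅ y : {y : Fin n → ℝ // y ∈ Ω ∧ dist y x < δ.1}, g y.1

/-- Upper Baire operator (relative to `Ω`):
`S(g)(x) = inf_{δ>0} sup { g(y) : y ∈ Ω, ‖y − x‖ < δ }`. -/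
noncomputable def baireUpper {n : ℕ} (Ω : Set (Fin n → ℝ))
    (g : (Fin n → ℝ) → EReal) (x : Fin n → ℝ) : EReal :=
  ⨅ δ : {d : ℝ // 0 < d}, ⨆ y : {y : Fin n → ℝ // y ∈ Ω ∧ dist y x < δ.1}, g y.1

/-- An interval-valued function, given by its endpoint functions `u = [u.1, u.2]`,
is S-continuous on `Ω` if it is a well-formed interval function fixed by the
Baire operators: `F(u) = [I(u̲), S(ū)] = u` on `Ω`. -/
def SCont {n : ℕ} (Ω : Set (Fin n → ℝ))
    (u : ((Fin n → ℝ) → EReal) × ((Fin n → ℝ) → EReal)) : Prop :=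
  (∀ x ∈ Ω, u.1 x ≤ u.2 x) ∧
  (∀ x ∈ Ω, baireLower Ω u.1 x = u.1 x ∧ baireUpper Ω u.2 x = u.2 x)

/-- `u` is Hausdorff continuous on `Ω`: S-continuous and minimal with respect to
interval inclusion among S-continuous interval functions. -/
def HCont {n : ℕ} (Ω : Set (Fin n → ℝ))
    (u : ((Fin n → ℝ) → EReal) × ((Fin n → ℝ) → EReal)) : Prop :=
  SCont Ω u ∧
  ∀ v, SCont Ω v → (∀ x ∈ Ω, u.1 x ≤ v.1 x ∧ v.2 x ≤ u.2 x) →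
    ∀ x ∈ Ω, v.1 x = u.1 x ∧ v.2 x = u.2 x

section Aux

variable {n : ℕ}

/-- The inner infimum in `baireLower`, over the ball of radius `δ` around `x`. -/
noncomputable def infT (Ω : Set (Fin n → ℝ)) (g : (Fin n → ℝ) → EReal)
    (x : Fin n → ℝ) (δ : ℝ) : EReal :=
  ⨅ y : {y : Fin n → ℝ // y ∈ Ω ∧ dist y x < δ}, g y.1

/-- The inner supremum in `baireUpper`. -/
noncomputable def supT (Ω : Set (Fin n → ℝ)) (g : (Fin n → ℝ) → EReal)
    (x : Fin n → ℝ) (δ : ℝ) : EReal :=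
  ⨆ y : {y : Fin n → ℝ // y ∈ Ω ∧ dist y x < δ}, g y.1

variable {Ω D : Set (Fin n → ℝ)} {g h : (Fin n → ℝ) → EReal} {x x' : Fin n → ℝ} {δ δ' : ℝ}

lemma baireLower_eq : baireLower Ω g x = ⨆ δ : {d : ℝ // 0 < d}, infT Ω g x δ.1 := rfl

lemma baireUpper_eq : baireUpper Ω g x = ⨅ δ : {d : ℝ // 0 < d}, supT Ω g x δ.1 := rfl

lemma infT_le (hx' : x' ∈ Ω) (hd : dist x' x < δ) : infT Ω g x δ ≤ g x' :=
  iInf_le_of_le ⟨x', hx', hd⟩ le_rfl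

lemma le_supT (hx' : x' ∈ Ω) (hd : dist x' x < δ) : g x' ≤ supT Ω g x δ :=
  le_iSup_of_le ⟨x', hx', hd⟩ le_rfl

lemma infT_mono_pt (hsub : dist x' x + δ' ≤ δ) : infT Ω g x δ ≤ infT Ω g x' δ' :=
  le_iInf fun y => iInf_le_of_le ⟨y.1, y.2.1, by
    have h1 := y.2.2
    calc dist y.1 x ≤ dist y.1 x' + dist x' x := dist_triangle _ _ _
      _ < δ' + dist x' x := by linarith
      _ ≤ δ := by linarith⟩ le_rfl

lemma supT_mono_pt (hsub : dist x' x + δ' ≤ δ) : supT Ω g x' δ' ≤ supT Ω g x δ :=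
  iSup_le fun y => le_iSup_of_le ⟨y.1, y.2.1, by
    have h1 := y.2.2
    calc dist y.1 x ≤ dist y.1 x' + dist x' x := dist_triangle _ _ _
      _ < δ' + dist x' x := by linarith
      _ ≤ δ := by linarith⟩ le_rfl

lemma bl_mono (hgh : ∀ y ∈ Ω, g y ≤ h y) (x : Fin n → ℝ) :
    baireLower Ω g x ≤ baireLower Ω h x :=
  iSup_mono fun _ => iInf_mono fun y => hgh y.1 y.2.1

lemma bu_mono (hgh : ∀ y ∈ Ω, g y ≤ h y) (x : Fin n → ℝ) :
    baireUpper Ω g x ≤ baireUpper Ω h x :=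
  iInf_mono fun _ => iSup_mono fun y => hgh y.1 y.2.1

lemma bl_le (hx : x ∈ Ω) : baireLower Ω g x ≤ g x :=
  iSup_le fun δ => infT_le hx (by simpa using δ.2)

lemma le_bu (hx : x ∈ Ω) : g x ≤ baireUpper Ω g x :=
  le_iInf fun δ => le_supT hx (by simpa using δ.2)

lemma bl_idem : baireLower Ω (baireLower Ω g) x = baireLower Ω g x := by
  refine le_antisymm (bl_mono (fun y hy => bl_le hy) x) ?_
  refine iSup_le fun δ => le_iSup_of_le ⟨δ.1 / 2, half_pos δ.2⟩ (le_iInf fun y => ?_)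
  have hy : dist y.1 x < δ.1 / 2 := y.2.2
  refine le_trans (infT_mono_pt (x' := y.1) (δ' := δ.1 / 2) (by linarith)) ?_
  exact le_iSup (fun d : {d : ℝ // 0 < d} => infT Ω g y.1 d.1) ⟨δ.1 / 2, half_pos δ.2⟩

lemma bu_idem : baireUpper Ω (baireUpper Ω g) x = baireUpper Ω g x := by
  refine le_antisymm ?_ (bu_mono (fun y hy => le_bu hy) x)
  refine le_iInf fun δ => iInf_le_of_le ⟨δ.1 / 2, half_pos δ.2⟩ (iSup_le fun y => ?_)
  have hy : dist y.1 x < δ.1 / 2 := y.2.2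
  refine le_trans ?_ (supT_mono_pt (x' := y.1) (δ' := δ.1 / 2) (by linarith))
  exact iInf_le (fun d : {d : ℝ // 0 < d} => supT Ω g y.1 d.1) ⟨δ.1 / 2, half_pos δ.2⟩

lemma isClosed_bl_le (p : EReal) : IsClosed {x | baireLower Ω g x ≤ p} := by
  rw [← isOpen_compl_iff, Metric.isOpen_iff]
  intro x hx
  simp only [Set.mem_compl_iff, Set.mem_setOf_eq, not_le] at hx
  obtain ⟨δ, hδ⟩ := lt_iSup_iff.mp hx
  refine ⟨δ.1 / 2, half_pos δ.2, fun x' hx' => ?_⟩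
  rw [Metric.mem_ball] at hx'
  simp only [Set.mem_compl_iff, Set.mem_setOf_eq, not_le]
  calc p < infT Ω g x δ.1 := hδ
    _ ≤ infT Ω g x' (δ.1 / 2) := infT_mono_pt (by linarith)
    _ ≤ baireLower Ω g x' :=
      le_iSup (fun d : {d : ℝ // 0 < d} => infT Ω g x' d.1) ⟨δ.1 / 2, half_pos δ.2⟩

lemma isClosed_le_bu (q : EReal) : IsClosed {x | q ≤ baireUpper Ω g x} := by
  rw [← isOpen_compl_iff, Metric.isOpen_iff]
  intro x hx
  simp only [Set.mem_compl_iff, Set.mem_setOf_eq, not_le] at hx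
  obtain ⟨δ, hδ⟩ := iInf_lt_iff.mp hx
  refine ⟨δ.1 / 2, half_pos δ.2, fun x' hx' => ?_⟩
  rw [Metric.mem_ball] at hx'
  simp only [Set.mem_compl_iff, Set.mem_setOf_eq, not_le]
  calc baireUpper Ω g x'
      ≤ supT Ω g x' (δ.1 / 2) :=
        iInf_le (fun d : {d : ℝ // 0 < d} => supT Ω g x' d.1) ⟨δ.1 / 2, half_pos δ.2⟩
    _ ≤ supT Ω g x δ.1 := supT_mono_pt (by linarith)
    _ < q := hδ

lemma hc_bl {u : ((Fin n → ℝ) → EReal) × ((Fin n → ℝ) → EReal)} (hu : HCont Ω u) :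
    ∀ x ∈ Ω, baireLower Ω u.2 x = u.1 x := by
  have hs : SCont Ω (baireLower Ω u.2, u.2) :=
    ⟨fun y hy => bl_le hy, fun y hy => ⟨bl_idem, (hu.1.2 y hy).2⟩⟩
  have h2 := hu.2 _ hs (fun y hy =>
    ⟨by rw [← (hu.1.2 y hy).1]; exact bl_mono hu.1.1 y, le_rfl⟩)
  exact fun x hx => (h2 x hx).1

lemma hc_bu {u : ((Fin n → ℝ) → EReal) × ((Fin n → ℝ) → EReal)} (hu : HCont Ω u) :
    ∀ x ∈ Ω, baireUpper Ω u.1 x = u.2 x := by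
  have hs : SCont Ω (u.1, baireUpper Ω u.1) :=
    ⟨fun y hy => le_bu hy, fun y hy => ⟨(hu.1.2 y hy).1, bu_idem⟩⟩
  have h2 := hu.2 _ hs (fun y hy =>
    ⟨le_rfl, by rw [← (hu.1.2 y hy).2]; exact bu_mono hu.1.1 y⟩)
  exact fun x hx => (h2 x hx).2

lemma det_upper {u : ((Fin n → ℝ) → EReal) × ((Fin n → ℝ) → EReal)} (hu : HCont Ω u)
    (hD1 : D ⊆ Ω) (hD2 : Ω ⊆ closure D) (hx : x ∈ Ω) :
    u.2 x = ⨅ δ : {d : ℝ // 0 < d}, supT D u.2 x δ.1 := by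
  refine le_antisymm ?_ ?_
  · rw [← hc_bu hu x hx]
    refine le_iInf fun δ => iInf_le_of_le δ (iSup_le fun y => ?_)
    rw [← hc_bl hu y.1 y.2.1]
    refine iSup_le fun δ' => ?_
    have hεpos : 0 < min δ'.1 (δ.1 - dist y.1 x) := lt_min δ'.2 (by have := y.2.2; linarith)
    obtain ⟨d, hdD, hdd⟩ := Metric.mem_closure_iff.mp (hD2 y.2.1) _ hεpos
    have hdy : dist d y.1 < δ'.1 := by
      rw [dist_comm] at hdd; exact lt_of_lt_of_le hdd (min_le_left _ _)
    have hdx : dist d x < δ.1 := by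
      have h2 : dist y.1 d < δ.1 - dist y.1 x := lt_of_lt_of_le hdd (min_le_right _ _)
      have h3 := y.2.2
      calc dist d x ≤ dist d y.1 + dist y.1 x := dist_triangle _ _ _
        _ < δ.1 := by rw [dist_comm] at h2; linarith
    exact le_trans (infT_le (hD1 hdD) hdy) (le_supT hdD hdx)
  · refine le_trans (iInf_mono fun δ => iSup_le fun y => le_supT (hD1 y.2.1) y.2.2) ?_
    rw [← baireUpper_eq]
    exact le_of_eq (hu.1.2 x hx).2

lemma det_lower {u : ((Fin n → ℝ) → EReal) × ((Fin n → ℝ) → EReal)} (hu : HCont Ω u)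
    (hD1 : D ⊆ Ω) (hD2 : Ω ⊆ closure D) (hx : x ∈ Ω) :
    u.1 x = ⨆ δ : {d : ℝ // 0 < d}, infT D u.1 x δ.1 := by
  refine le_antisymm ?_ ?_
  · refine le_trans ?_ (iSup_mono fun δ => le_iInf fun y => infT_le (hD1 y.2.1) y.2.2)
    rw [← baireLower_eq]
    exact le_of_eq (hu.1.2 x hx).1.symm
  · rw [← hc_bl hu x hx]
    refine iSup_le fun δ => le_iSup_of_le δ (le_iInf fun y => ?_)
    rw [← hc_bu hu y.1 y.2.1]
    refine le_iInf fun δ' => ?_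
    have hεpos : 0 < min δ'.1 (δ.1 - dist y.1 x) := lt_min δ'.2 (by have := y.2.2; linarith)
    obtain ⟨d, hdD, hdd⟩ := Metric.mem_closure_iff.mp (hD2 y.2.1) _ hεpos
    have hdy : dist d y.1 < δ'.1 := by
      rw [dist_comm] at hdd; exact lt_of_lt_of_le hdd (min_le_left _ _)
    have hdx : dist d x < δ.1 := by
      have h2 : dist y.1 d < δ.1 - dist y.1 x := lt_of_lt_of_le hdd (min_le_right _ _)
      have h3 := y.2.2
      calc dist d x ≤ dist d y.1 + dist y.1 x := dist_triangle _ _ _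
        _ < δ.1 := by rw [dist_comm] at h2; linarith
    exact le_trans (infT_le hdD hdx) (le_supT (hD1 hdD) hdy)

end Aux

/-- a Hausdorff continuous function is point-valued on a dense
subset of Ω, and is completely determined by its values on any dense subset of
point-valuedness. -/
theorem statement_4 (n : ℕ) (Ω : Set (Fin n → ℝ)) (hΩ : IsOpen Ω)
    (u v : ((Fin n → ℝ) → EReal) × ((Fin n → ℝ) → EReal))
    (hu : HCont Ω u) (hv : HCont Ω v) :
    (Ω ⊆ closure {x ∈ Ω | u.1 x = u.2 x}) ∧
    (∀ D : Set (Fin n → ℝ), D ⊆ Ω → Ω ⊆ closure D →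
      (∀ x ∈ D, u.1 x = u.2 x ∧ v.1 x = v.2 x ∧ u.1 x = v.1 x) →
      ∀ x ∈ Ω, u.1 x = v.1 x ∧ u.2 x = v.2 x) := by
  constructor
  · -- density of the set of point values
    set f : (Fin n → ℝ) → EReal := baireLower Ω u.2 with hf
    set g : (Fin n → ℝ) → EReal := baireUpper Ω u.2 with hg
    set S : {pq : ℚ × ℚ // pq.1 < pq.2} → Set (Fin n → ℝ) := fun pq =>
      ({x | f x ≤ ((pq.1.1 : ℝ) : EReal)} ∩ {x | ((pq.1.2 : ℝ) : EReal) ≤ g x})ᶜ with hS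
    have hSopen : ∀ pq, IsOpen (S pq) := fun pq =>
      ((isClosed_bl_le _).inter (isClosed_le_bu _)).isOpen_compl
    have hSdense : ∀ pq, Dense (S pq) := by
      intro pq
      rw [dense_iff_inter_open]
      intro U hU hUne
      by_contra hc
      have hUE : ∀ y ∈ U, f y ≤ ((pq.1.1 : ℝ) : EReal) ∧ ((pq.1.2 : ℝ) : EReal) ≤ g y := by
        intro y hy
        by_contra hyE
        exact hc ⟨y, hy, fun hmem => hyE ⟨hmem.1, hmem.2⟩⟩
      obtain ⟨x, hxU⟩ := hUne
      -- x is in the closure of Ω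
      have hcl : x ∈ closure Ω := by
        rw [Metric.mem_closure_iff]
        intro ε hε
        by_contra hno
        push_neg at hno
        haveI : IsEmpty {y : Fin n → ℝ // y ∈ Ω ∧ dist y x < ε} :=
          ⟨fun y => absurd y.2.2 (not_lt.2 (by rw [dist_comm]; exact hno y.1 y.2.1))⟩
        have htop : infT Ω u.2 x ε = ⊤ := iInf_of_empty _
        have hle : (⊤ : EReal) ≤ f x := by
          rw [hf, baireLower_eq, ← htop]
          exact le_iSup (fun d : {d : ℝ // 0 < d} => infT Ω u.2 x d.1) ⟨ε, hε⟩
        have := le_trans hle (hUE x hxU).1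
        exact absurd this (by simp)
      obtain ⟨z, hzU, hzΩ⟩ := mem_closure_iff.mp hcl U hU hxU
      obtain ⟨ε, hε, hball⟩ := Metric.isOpen_iff.mp (hU.inter hΩ) z ⟨hzU, hzΩ⟩
      have key : ((pq.1.2 : ℝ) : EReal) ≤ f z := by
        rw [hf, baireLower_eq]
        refine le_trans ?_ (le_iSup (fun d : {d : ℝ // 0 < d} => infT Ω u.2 z d.1) ⟨ε, hε⟩)
        refine le_iInf fun y => ?_
        have hyU : y.1 ∈ U := (hball (Metric.mem_ball.mpr y.2.2)).1
        have h2 := (hUE y.1 hyU).2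
        rwa [hg, (hu.1.2 y.1 y.2.1).2] at h2
      have hcon : ((pq.1.2 : ℝ) : EReal) ≤ ((pq.1.1 : ℝ) : EReal) :=
        key.trans (hUE z hzU).1
      exact absurd hcon (not_le.2 (by exact_mod_cast pq.2))
    have hT : Dense (⋂ pq, S pq) := dense_iInter_of_isOpen hSopen hSdense
    intro x hx
    rw [mem_closure_iff]
    intro o ho hxo
    obtain ⟨z, ⟨hzo, hzΩ⟩, hzT⟩ :=
      hT.inter_open_nonempty (o ∩ Ω) (ho.inter hΩ) ⟨x, hxo, hx⟩
    refine ⟨z, hzo, hzΩ, ?_⟩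
    by_contra hne
    have hlt : u.1 z < u.2 z := lt_of_le_of_ne (hu.1.1 z hzΩ) hne
    have hlt' : f z < g z := by
      rw [hf, hg, hc_bl hu z hzΩ, (hu.1.2 z hzΩ).2]; exact hlt
    obtain ⟨p, hp1, hp2⟩ := EReal.exists_rat_btwn_of_lt hlt'
    obtain ⟨q, hq1, hq2⟩ := EReal.exists_rat_btwn_of_lt hp2
    have hpq : p < q := by exact_mod_cast hq1
    have hzS := Set.mem_iInter.mp hzT ⟨(p, q), hpq⟩
    exact hzS ⟨hp1.le, hq2.le⟩
  · -- determined by the values on a dense set of point values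
    intro D hD1 hD2 hpt x hx
    constructor
    · rw [det_lower hu hD1 hD2 hx, det_lower hv hD1 hD2 hx]
      exact iSup_congr fun δ => iInf_congr fun y => (hpt y.1 y.2.1).2.2
    · rw [det_upper hu hD1 hD2 hx, det_upper hv hD1 hD2 hx]
      refine iInf_congr fun δ => iSup_congr fun y => ?_
      obtain ⟨h1, h2, h3⟩ := hpt y.1 y.2.1
      rw [← h1, h3, h2]
end
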